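/- The pointwise infimum construction preserves the class: given ordered values θ_(1) ≤ … ≤ θ_(n) attached to points X_(1),…,X_(n) ∈ ℝ^d satisfying the consistency condition that (θ_(1),…,θ_(n)) lies in the constraint set Q (ordered so that X_(i) ∉ Cv†({X_(j) : θ_(j) < θ_(i)})), the piecewise constant function φ̂ defined by φ̂(x) = θ_(m) for x ∈ Cv†({X_(1),…,X_(m)}) \ Cv†({X_(1),…,X_(m−1)}) and φ̂(x) = θ_(n) outside Cv†({X_(1),…,X_(n)}) is quasiconvex and decreasing, and satisfies φ̂(X_(i)) = θ_(i) for all i. -/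

import Mathlib

/-!
Write `C m = Cv†({X j | j ≤ m})` and take `φ x = min {θ m | x ∈ C m}`, or `θ (last)` if there is no
such `m`. The sets `C m` are convex, upward closed and increase with `m`, so every lower level set
of `φ` is either everything or an increasing union of some `C m`, hence convex, and `φ` is
decreasing. As `θ` is increasing, the minimum is attained at the first `m` with `x ∈ C m`, and the
consistency condition says that for `x = X i` this first index is `i`.
-/

open Finset MeasureTheory

/-- Upper orthant of a set `A ⊆ ℝ^d`. -/
def UpOrth {d : ℕ} (A : Set (Fin d → ℝ)) : Set (Fin d → ℝ) :=
  {y | ∃ x ∈ A, x ≤ y}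

/-- Upper orthant of the convex hull. -/
def CvDag {d : ℕ} (A : Set (Fin d → ℝ)) : Set (Fin d → ℝ) :=
  UpOrth (convexHull ℝ A)

/-- Quasiconvexity: all lower level sets are convex. -/
def QConv {d : ℕ} (ψ : (Fin d → ℝ) → ℝ) : Prop :=
  ∀ α : ℝ, Convex ℝ {x : Fin d → ℝ | ψ x ≤ α}

/-- Coordinatewise decreasing. -/
def Decr {d : ℕ} (ψ : (Fin d → ℝ) → ℝ) : Prop :=
  ∀ x y : Fin d → ℝ, x ≤ y → ψ y ≤ ψ x

lemma cvDag_mono {d : ℕ} {A B : Set (Fin d → ℝ)} (h : A ⊆ B) : CvDag A ⊆ CvDag B :=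
  fun _ ⟨x, hx, hxy⟩ => ⟨x, convexHull_mono h hx, hxy⟩

lemma mem_cvDag_of_le {d : ℕ} {A : Set (Fin d → ℝ)} {x y : Fin d → ℝ}
    (hx : x ∈ CvDag A) (hxy : x ≤ y) : y ∈ CvDag A :=
  let ⟨z, hz, hzx⟩ := hx
  ⟨z, hz, hzx.trans hxy⟩

lemma subset_cvDag {d : ℕ} (A : Set (Fin d → ℝ)) : A ⊆ CvDag A :=
  fun a ha => ⟨a, subset_convexHull ℝ A ha, le_rfl⟩

lemma convex_cvDag {d : ℕ} (A : Set (Fin d → ℝ)) : Convex ℝ (CvDag A) := by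
  rintro _ ⟨x₁, hx₁, hle₁⟩ _ ⟨x₂, hx₂, hle₂⟩ a b ha hb hab
  exact ⟨a • x₁ + b • x₂, convex_convexHull ℝ A hx₁ hx₂ ha hb hab,
    add_le_add (smul_le_smul_of_nonneg_left hle₁ ha) (smul_le_smul_of_nonneg_left hle₂ hb)⟩

section InfLevel

variable {ι E : Type*} [Fintype ι]

open scoped Classical in
/-- `min {θ i | x ∈ C i}`; the extra index `i₀` supplies the value `θ i₀` at points lying in no
`C i`, and changes nothing elsewhere when `θ i₀` is the largest value. -/
noncomputable def infLevel (C : ι → Set E) (θ : ι → ℝ) (i₀ : ι) (x : E) : ℝ :=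
  (insert i₀ {i | x ∈ C i}.toFinset).inf' (Finset.insert_nonempty _ _) θ

variable {C : ι → Set E} {θ : ι → ℝ} {i₀ : ι} {x y : E}

lemma infLevel_le_iff {α : ℝ} :
    infLevel C θ i₀ x ≤ α ↔ θ i₀ ≤ α ∨ ∃ i, x ∈ C i ∧ θ i ≤ α := by
  classical
  simp [infLevel, Finset.inf'_le_iff]

lemma infLevel_le_of_mem {i : ι} (hx : x ∈ C i) : infLevel C θ i₀ x ≤ θ i :=
  infLevel_le_iff.2 (Or.inr ⟨i, hx, le_rfl⟩)

lemma infLevel_anti (hxy : ∀ i, x ∈ C i → y ∈ C i) : infLevel C θ i₀ y ≤ infLevel C θ i₀ x := by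
  classical
  refine Finset.inf'_mono _ (Finset.insert_subset_insert _ fun i hi => ?_) _
  simpa using hxy i (by simpa using hi)

lemma infLevel_of_forall_notMem (hx : ∀ i, x ∉ C i) : infLevel C θ i₀ x = θ i₀ := by
  classical
  simp [infLevel, hx]

lemma infLevel_eq_of_mem_of_forall_lt_notMem [LinearOrder ι] (hθ : Monotone θ) {m : ι}
    (hm : θ m ≤ θ i₀) (hx : x ∈ C m) (hmin : ∀ i < m, x ∉ C i) : infLevel C θ i₀ x = θ m := by
  refine le_antisymm (infLevel_le_of_mem hx) ?_
  classical
  refine Finset.le_inf' _ _ fun i hi => ?_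
  simp only [Finset.mem_insert, Set.mem_toFinset, Set.mem_ofPred_eq] at hi
  rcases hi with rfl | hi
  · exact hm
  · exact hθ (not_lt.1 fun h => hmin i h hi)

lemma convex_setOf_infLevel_le {𝕜 : Type*} [Semiring 𝕜] [PartialOrder 𝕜] [AddCommMonoid E]
    [SMul 𝕜 E] [LinearOrder ι] (hC : Monotone C) (hconv : ∀ i, Convex 𝕜 (C i)) (α : ℝ) :
    Convex 𝕜 {x | infLevel C θ i₀ x ≤ α} := by
  by_cases hα : θ i₀ ≤ α
  · simpa [infLevel_le_iff, hα] using convex_univ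
  · have : {x | infLevel C θ i₀ x ≤ α} = ⋃ i : {i // θ i ≤ α}, C i := by
      ext x; simp [infLevel_le_iff, hα, and_comm]
    rw [this]
    exact (hC.comp (Subtype.mono_coe _)).directed_le.convex_iUnion fun i => hconv i

end InfLevel

theorem stmt_19 (d n : ℕ) (X : Fin (n + 1) → (Fin d → ℝ))
    (θ : Fin (n + 1) → ℝ) (hθ : StrictMono θ)
    (hcons : ∀ i : Fin (n + 1), X i ∉ CvDag (X '' {j | j < i})) :
    ∃ φ : (Fin d → ℝ) → ℝ,
      QConv φ ∧ Decr φ ∧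
      (∀ i, φ (X i) = θ i) ∧
      (∀ (m : Fin (n + 1)) (x : Fin d → ℝ),
        x ∈ CvDag (X '' {j | j ≤ m}) → (∀ m' < m, x ∉ CvDag (X '' {j | j ≤ m'})) →
        φ x = θ m) ∧
      (∀ x : Fin d → ℝ, x ∉ CvDag (X '' Set.univ) → φ x = θ (Fin.last n)) := by
  set C : Fin (n + 1) → Set (Fin d → ℝ) := fun m => CvDag (X '' {j | j ≤ m})
  have hC : Monotone C := fun m m' h => cvDag_mono (Set.image_mono fun j hj => le_trans hj h)
  have hvalue : ∀ m x, x ∈ C m → (∀ m' < m, x ∉ C m') → infLevel C θ (Fin.last n) x = θ m :=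
    fun m _ => infLevel_eq_of_mem_of_forall_lt_notMem hθ.monotone (hθ.monotone (Fin.le_last m))
  refine ⟨infLevel C θ (Fin.last n), convex_setOf_infLevel_le hC fun m => convex_cvDag _,
    fun x y hxy => infLevel_anti fun m hx => mem_cvDag_of_le hx hxy, fun i => ?_, hvalue,
    fun x hx => infLevel_of_forall_notMem fun m hm => hx ?_⟩
  · refine hvalue i (X i) (subset_cvDag _ ⟨i, le_refl i, rfl⟩) fun m hm hXi => hcons i ?_
    exact cvDag_mono (Set.image_mono fun j hj => lt_of_le_of_lt hj hm) hXi
  · exact cvDag_mono (Set.image_mono (Set.subset_univ _)) hm
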